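/- arXiv:1607.04444 — 3 statements merged into one kernel-verified Lean document; each statement's English description precedes it below -/
import Mathlib

section
/- (Eckart–Young for Hilbert–Schmidt operators) Let H₁, H₂ be separable Hilbert spaces and u ∈ H₁ ⊗ H₂ a Hilbert–Schmidt tensor with singular value decomposition u = Σ_{k=1}^∞ σ_k e_k ⊗ f_k, where σ₁ ≥ σ₂ ≥ … ≥ 0 and (e_k), (f_k) are orthonormal systems. Then for every r ∈ ℕ, ‖u − Σ_{k=1}^r σ_k e_k ⊗ f_k‖² = Σ_{k>r} σ_k² = min { ‖u − w‖² : w ∈ H₁ ⊗ H₂, rank(w) ≤ r }, where rank(w) denotes the rank of the induced operator H₂ → H₁ and ‖·‖ is the Hilbert–Schmidt norm. -/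
open scoped RealInnerProductSpace


section Aux
variable {E : Type*} [NormedAddCommGroup E] [InnerProductSpace ℝ E]

lemma ey_inner_eq {ι : Type*} {g : ι → E} (hg : Orthonormal ℝ g)
    {a : ι → ℝ} {x : E} (hx : HasSum (fun k => a k • g k) x) (k : ι) :
    ⟪g k, x⟫ = a k := by
  classical
  have h := (innerSL ℝ (g k)).hasSum hx
  have hite := orthonormal_iff_ite.mp hg
  have heq : (fun j => (innerSL ℝ (g k)) (a j • g j)) = fun j => if j = k then a k else 0 := by
    funext j
    simp only [innerSL_apply_apply, real_inner_smul_right, hite k j]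
    rcases eq_or_ne j k with rfl | hjk
    · simp
    · simp [hjk, Ne.symm hjk]
  rw [heq] at h
  exact h.unique (hasSum_ite_eq k (a k))

lemma ey_norm_sq {ι : Type*} {g : ι → E} (hg : Orthonormal ℝ g)
    {a : ι → ℝ} {x : E} (hx : HasSum (fun k => a k • g k) x) :
    HasSum (fun k => a k ^ 2) (‖x‖ ^ 2) := by
  have h := (innerSL ℝ x).hasSum hx
  have heq : (fun k => (innerSL ℝ x) (a k • g k)) = fun k => a k ^ 2 := by
    funext k
    rw [innerSL_apply_apply, real_inner_smul_right, real_inner_comm, ey_inner_eq hg hx k]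
    ring
  rw [heq] at h
  rwa [innerSL_apply_apply, real_inner_self_eq_norm_sq] at h

lemma ey_rearrange (b c : ℕ → ℝ) (hb0 : ∀ k, 0 ≤ b k) (hbm : Antitone b)
    (hbs : Summable b) (hc0 : ∀ k, 0 ≤ c k) (hc1 : ∀ k, c k ≤ 1)
    (hcs : Summable c) (r : ℕ) (hcr : ∑' k, c k ≤ r) :
    ∑' k, b k * c k ≤ ∑ k ∈ Finset.range r, b k := by
  have hbc : Summable (fun k => b k * c k) :=
    Summable.of_nonneg_of_le (fun k => mul_nonneg (hb0 k) (hc0 k))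
      (fun k => mul_le_of_le_one_right (hb0 k) (hc1 k)) hbs
  have hsplit := Summable.sum_add_tsum_nat_add r hbc
  have hcsplit := Summable.sum_add_tsum_nat_add r hcs
  have hctail : Summable (fun k => c (k + r)) := (summable_nat_add_iff r).2 hcs
  have hbctail : Summable (fun k => b (k + r) * c (k + r)) := (summable_nat_add_iff r).2 hbc
  have htail : ∑' k, b (k + r) * c (k + r) ≤ b r * ∑' k, c (k + r) := by
    rw [← tsum_mul_left]
    refine Summable.tsum_le_tsum (fun k => ?_) hbctail (hctail.mul_left _)
    exact mul_le_mul_of_nonneg_right (hbm (Nat.le_add_left r k)) (hc0 _)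
  have hctail_le : ∑' k, c (k + r) ≤ r - ∑ k ∈ Finset.range r, c k := by linarith
  have h1 : ∑' k, b k * c k ≤ ∑ k ∈ Finset.range r, b k * c k
      + b r * ((r : ℝ) - ∑ k ∈ Finset.range r, c k) := by
    have hbr : 0 ≤ b r := hb0 r
    nlinarith [htail, hctail_le, hsplit]
  have h2 : b r * ((r : ℝ) - ∑ k ∈ Finset.range r, c k)
      = ∑ k ∈ Finset.range r, b r * (1 - c k) := by
    rw [← Finset.mul_sum, Finset.sum_sub_distrib, Finset.sum_const, Finset.card_range]
    simp
  rw [h2, ← Finset.sum_add_distrib] at h1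
  refine h1.trans (Finset.sum_le_sum fun k hk => ?_)
  have hkr : b r ≤ b k := hbm (Finset.mem_range.mp hk).le
  nlinarith [hb0 k, hc0 k, hc1 k]

lemma ey_CS {α β : ℕ → ℝ} {L B : ℝ} (hL : HasSum (fun k => α k * β k) L)
    (hα : Summable (fun k => α k ^ 2))
    (hβ : ∀ n, ∑ k ∈ Finset.range n, β k ^ 2 ≤ B) :
    L ^ 2 ≤ (∑' k, α k ^ 2) * B := by
  have hA0 : 0 ≤ ∑' k, α k ^ 2 := tsum_nonneg fun k => sq_nonneg _
  have htd : Filter.Tendsto (fun n => (∑ k ∈ Finset.range n, α k * β k) ^ 2)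
      Filter.atTop (nhds (L ^ 2)) := hL.tendsto_sum_nat.pow 2
  refine le_of_tendsto' htd fun n => ?_
  calc (∑ k ∈ Finset.range n, α k * β k) ^ 2
      ≤ (∑ k ∈ Finset.range n, α k ^ 2) * ∑ k ∈ Finset.range n, β k ^ 2 :=
        Finset.sum_mul_sq_le_sq_mul_sq _ _ _
    _ ≤ (∑' k, α k ^ 2) * B :=
        mul_le_mul (Summable.sum_le_tsum _ (fun k _ => sq_nonneg _) hα) (hβ n)
          (Finset.sum_nonneg fun k _ => sq_nonneg _) hA0

end Aux

section Main
variable {H₁ H₂ E : Type*}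
    [NormedAddCommGroup H₁] [InnerProductSpace ℝ H₁]
    [NormedAddCommGroup H₂] [InnerProductSpace ℝ H₂]
    [NormedAddCommGroup E] [InnerProductSpace ℝ E]

lemma ey_lower (t : H₁ →ₗ[ℝ] H₂ →ₗ[ℝ] E)
    (ht : ∀ (x x' : H₁) (y y' : H₂), ⟪t x y, t x' y'⟫ = ⟪x, x'⟫ * ⟪y, y'⟫)
    (σ : ℕ → ℝ) (hσ0 : ∀ k, 0 ≤ σ k) (hσm : Antitone σ)
    (e : ℕ → H₁) (f : ℕ → H₂) (he : Orthonormal ℝ e) (hf : Orthonormal ℝ f)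
    (u : E) (hu : HasSum (fun k => σ k • t (e k) (f k)) u)
    (r m : ℕ) (hm : m ≤ r) (q : Fin m → H₂) (hq : Orthonormal ℝ q) (b : Fin m → H₁) :
    (∑' k : ℕ, σ (r + k) ^ 2) ≤ ‖u - ∑ j, t (b j) (q j)‖ ^ 2 := by
  classical
  have hg : Orthonormal ℝ (fun k => t (e k) (f k)) := by
    rw [orthonormal_iff_ite]
    intro i j
    rw [ht, orthonormal_iff_ite.mp he, orthonormal_iff_ite.mp hf]
    split_ifs <;> simp
  have hnorm : HasSum (fun k => σ k ^ 2) (‖u‖ ^ 2) := ey_norm_sq hg hu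
  have hσ2 : Summable (fun k => σ k ^ 2) := hnorm.summable
  -- Bessel-type summability for f against any vector
  have hfs : ∀ v : H₂, Summable fun k => ⟪f k, v⟫ ^ 2 := by
    intro v
    have := hf.inner_products_summable (x := v)
    simpa [Real.norm_eq_abs, sq_abs] using this
  set w := ∑ j, t (b j) (q j) with hw
  set s : Fin m → ℝ := fun j => ∑' k, (σ k * ⟪f k, q j⟫) ^ 2 with hs
  have hα : ∀ j, Summable fun k => (σ k * ⟪f k, q j⟫) ^ 2 := by
    intro j
    refine Summable.of_nonneg_of_le (fun k => sq_nonneg _) (fun k => ?_)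
      ((hfs (q j)).mul_left (σ 0 ^ 2))
    have h1 : σ k ^ 2 ≤ σ 0 ^ 2 := pow_le_pow_left₀ (hσ0 k) (hσm (Nat.zero_le k)) 2
    have h2 : 0 ≤ ⟪f k, q j⟫ ^ 2 := sq_nonneg _
    calc (σ k * ⟪f k, q j⟫) ^ 2 = σ k ^ 2 * ⟪f k, q j⟫ ^ 2 := by ring
      _ ≤ σ 0 ^ 2 * ⟪f k, q j⟫ ^ 2 := mul_le_mul_of_nonneg_right h1 h2
  have hinner : ∀ j, HasSum (fun k => (σ k * ⟪f k, q j⟫) * ⟪e k, b j⟫)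
      ⟪u, t (b j) (q j)⟫ := by
    intro j
    have h := (innerSL ℝ (t (b j) (q j))).hasSum hu
    have heq : (fun k => (innerSL ℝ (t (b j) (q j))) (σ k • t (e k) (f k)))
        = fun k => (σ k * ⟪f k, q j⟫) * ⟪e k, b j⟫ := by
      funext k
      rw [innerSL_apply_apply, real_inner_smul_right, ht, real_inner_comm (b j), real_inner_comm (q j)]
      ring
    rw [heq] at h
    rwa [innerSL_apply_apply, real_inner_comm] at h
  have hCS : ∀ j, ⟪u, t (b j) (q j)⟫ ^ 2 ≤ s j * ‖b j‖ ^ 2 := by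
    intro j
    refine ey_CS (hinner j) (hα j) fun n => ?_
    have := he.sum_inner_products_le (x := b j) (s := Finset.range n)
    simpa [Real.norm_eq_abs, sq_abs] using this
  have hs0 : ∀ j, 0 ≤ s j := fun j => tsum_nonneg fun k => sq_nonneg _
  -- inner products and norms
  have hw1 : ⟪u, w⟫ = ∑ j, ⟪u, t (b j) (q j)⟫ := inner_sum _ _ _
  have hw2 : ‖w‖ ^ 2 = ∑ j, ‖b j‖ ^ 2 := by
    rw [← real_inner_self_eq_norm_sq, hw]
    simp only [sum_inner, inner_sum, ht, orthonormal_iff_ite.mp hq, mul_ite, mul_one, mul_zero]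
    simp [Finset.sum_ite_eq, real_inner_self_eq_norm_sq]
  have hexp : ‖u - w‖ ^ 2 = ‖u‖ ^ 2 - 2 * ⟪u, w⟫ + ‖w‖ ^ 2 := norm_sub_sq_real u w
  have hkey : ‖u‖ ^ 2 - ∑ j, s j ≤ ‖u - w‖ ^ 2 := by
    rw [hexp, hw1, hw2]
    have hterm : ∀ j : Fin m, -(s j) ≤ ‖b j‖ ^ 2 - 2 * ⟪u, t (b j) (q j)⟫ := by
      intro j
      have h1 := hCS j
      have h2 := hs0 j
      have h3 := sq_nonneg (‖b j‖)
      rcases le_or_gt (⟪u, t (b j) (q j)⟫) 0 with hX | hX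
      · nlinarith
      · nlinarith [sq_nonneg (s j - ‖b j‖ ^ 2), sq_nonneg (s j + ‖b j‖ ^ 2 - 2 * ⟪u, t (b j) (q j)⟫)]
    have := Finset.sum_le_sum (fun j (_ : j ∈ Finset.univ) => hterm j)
    rw [Finset.sum_neg_distrib, Finset.sum_sub_distrib] at this
    rw [Finset.mul_sum]
    linarith
  -- c k
  set c : ℕ → ℝ := fun k => ∑ j, ⟪f k, q j⟫ ^ 2 with hc
  have hsum_s : ∑ j, s j = ∑' k, σ k ^ 2 * c k := by
    rw [← Summable.tsum_finsetSum (fun j _ => hα j)]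
    refine tsum_congr fun k => ?_
    rw [hc, Finset.mul_sum]
    exact Finset.sum_congr rfl fun j _ => by ring
  have hc0 : ∀ k, 0 ≤ c k := fun k => Finset.sum_nonneg fun j _ => sq_nonneg _
  have hc1 : ∀ k, c k ≤ 1 := by
    intro k
    have := hq.sum_inner_products_le (x := f k) (s := Finset.univ)
    have hfk : ‖f k‖ = 1 := hf.1 k
    rw [hfk] at this
    simp only [Real.norm_eq_abs, sq_abs] at this
    calc c k = ∑ j, ⟪q j, f k⟫ ^ 2 := by
          exact Finset.sum_congr rfl fun j _ => by rw [real_inner_comm]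
      _ ≤ 1 ^ 2 := this
      _ = 1 := one_pow 2
  have hcs : Summable c := summable_sum fun j _ => hfs (q j)
  have hcr : ∑' k, c k ≤ (r : ℝ) := by
    rw [hc, Summable.tsum_finsetSum (fun j _ => hfs (q j))]
    have hbound : ∀ j : Fin m, ∑' k, ⟪f k, q j⟫ ^ 2 ≤ 1 := by
      intro j
      have := hf.tsum_inner_products_le (q j)
      have hqj : ‖q j‖ = 1 := hq.1 j
      rw [hqj] at this
      simpa [Real.norm_eq_abs, sq_abs] using this
    calc ∑ j : Fin m, ∑' k, ⟪f k, q j⟫ ^ 2 ≤ ∑ _j : Fin m, (1 : ℝ) :=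
          Finset.sum_le_sum fun j _ => hbound j
      _ = m := by simp
      _ ≤ r := by exact_mod_cast hm
  have hσ2m : Antitone fun k => σ k ^ 2 := fun k l h => pow_le_pow_left₀ (hσ0 l) (hσm h) 2
  have hrearr : ∑' k, σ k ^ 2 * c k ≤ ∑ k ∈ Finset.range r, σ k ^ 2 :=
    ey_rearrange _ c (fun k => sq_nonneg _) hσ2m hσ2 hc0 hc1 hcs r hcr
  have hτ : ∑' k : ℕ, σ (r + k) ^ 2 = ‖u‖ ^ 2 - ∑ k ∈ Finset.range r, σ k ^ 2 := by
    have hsplit := Summable.sum_add_tsum_nat_add r hσ2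
    rw [hnorm.tsum_eq] at hsplit
    have : ∑' k : ℕ, σ (r + k) ^ 2 = ∑' k : ℕ, σ (k + r) ^ 2 :=
      tsum_congr fun k => by rw [add_comm]
    linarith
  rw [hτ]
  linarith [hkey, hsum_s ▸ hrearr]
end Main


/-- Eckart–Young for Hilbert–Schmidt tensors: for `u = ∑ σ_k e_k ⊗ f_k` (SVD with
nonincreasing nonnegative singular values), the rank-`r` truncation error equals
`∑_{k>r} σ_k²`, and this is the minimum of `‖u - w‖²` over all `w` of rank at
most `r` (i.e. sums of `r` elementary tensors). The Hilbert tensor product is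
encoded by a bilinear map `t` with `⟪t x y, t x' y'⟫ = ⟪x,x'⟫⟪y,y'⟫`. -/
theorem stmt6 {H₁ H₂ E : Type*}
    [NormedAddCommGroup H₁] [InnerProductSpace ℝ H₁]
    [NormedAddCommGroup H₂] [InnerProductSpace ℝ H₂]
    [NormedAddCommGroup E] [InnerProductSpace ℝ E]
    (t : H₁ →ₗ[ℝ] H₂ →ₗ[ℝ] E)
    (ht : ∀ (x x' : H₁) (y y' : H₂), ⟪t x y, t x' y'⟫ = ⟪x, x'⟫ * ⟪y, y'⟫)
    (σ : ℕ → ℝ) (hσ0 : ∀ k, 0 ≤ σ k) (hσm : Antitone σ)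
    (e : ℕ → H₁) (f : ℕ → H₂) (he : Orthonormal ℝ e) (hf : Orthonormal ℝ f)
    (u : E) (hu : HasSum (fun k => σ k • t (e k) (f k)) u) (r : ℕ) :
    ‖u - ∑ k ∈ Finset.range r, σ k • t (e k) (f k)‖ ^ 2 = (∑' k : ℕ, σ (r + k) ^ 2) ∧
      IsLeast {c : ℝ | ∃ (x : Fin r → H₁) (y : Fin r → H₂),
          c = ‖u - ∑ i, t (x i) (y i)‖ ^ 2} (∑' k : ℕ, σ (r + k) ^ 2) := by
  classical
  have hg : Orthonormal ℝ (fun k => t (e k) (f k)) := by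
    rw [orthonormal_iff_ite]
    intro i j
    rw [ht, orthonormal_iff_ite.mp he, orthonormal_iff_ite.mp hf]
    split_ifs <;> simp
  -- Part 1
  have hv : HasSum (fun n => σ (n + r) • t (e (n + r)) (f (n + r)))
      (u - ∑ k ∈ Finset.range r, σ k • t (e k) (f k)) :=
    (hasSum_nat_add_iff' r).2 hu
  have hg' : Orthonormal ℝ (fun n => t (e (n + r)) (f (n + r))) :=
    hg.comp (· + r) (add_left_injective r)
  have h1 : HasSum (fun n => σ (n + r) ^ 2)
      (‖u - ∑ k ∈ Finset.range r, σ k • t (e k) (f k)‖ ^ 2) := ey_norm_sq hg' hv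
  have hpart1 : ‖u - ∑ k ∈ Finset.range r, σ k • t (e k) (f k)‖ ^ 2
      = ∑' k : ℕ, σ (r + k) ^ 2 := by
    rw [← h1.tsum_eq]
    exact tsum_congr fun k => by rw [add_comm]
  refine ⟨hpart1, ?_, ?_⟩
  · -- membership
    refine ⟨fun i => σ i • e i, fun i => f i, ?_⟩
    have hsum : (∑ i : Fin r, t ((fun i : Fin r => σ i • e i) i) ((fun i : Fin r => f i) i))
        = ∑ k ∈ Finset.range r, σ k • t (e k) (f k) := by
      rw [← Fin.sum_univ_eq_sum_range (fun k => σ k • t (e k) (f k)) r]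
      exact Finset.sum_congr rfl fun i _ => by rw [map_smul, LinearMap.smul_apply]
    rw [hsum, hpart1]
  · -- lower bound
    rintro c ⟨x, y, rfl⟩
    set Y := Submodule.span ℝ (Set.range y) with hY
    haveI : FiniteDimensional ℝ Y := FiniteDimensional.span_of_finite ℝ (Set.finite_range y)
    set m := Module.finrank ℝ Y with hmdef
    have hm : m ≤ r := by
      have := finrank_range_le_card (R := ℝ) y
      simpa [Set.finrank, Fintype.card_fin] using this
    set Q := stdOrthonormalBasis ℝ Y with hQ
    set q : Fin m → H₂ := fun j => (Q j : H₂) with hqdef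
    have hq : Orthonormal ℝ q := by
      rw [orthonormal_iff_ite]
      intro i j
      have := orthonormal_iff_ite.mp Q.orthonormal i j
      rwa [Submodule.coe_inner] at this
    set b : Fin m → H₁ := fun j => ∑ i, ⟪q j, y i⟫ • x i with hb
    have hrepr : ∀ i, y i = ∑ j, ⟪q j, y i⟫ • q j := by
      intro i
      have hmem : y i ∈ Y := Submodule.subset_span (Set.mem_range_self i)
      have h := Q.sum_repr' (⟨y i, hmem⟩ : Y)
      have h2 : y i = ((∑ j, (⟪Q j, (⟨y i, hmem⟩ : Y)⟫ : ℝ) • Q j : Y) : H₂) := by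
        rw [h]
      conv_lhs => rw [h2]
      have h3 : ((∑ j, (⟪Q j, (⟨y i, hmem⟩ : Y)⟫ : ℝ) • Q j : Y) : H₂)
          = ∑ j, (⟪Q j, (⟨y i, hmem⟩ : Y)⟫ : ℝ) • (Q j : H₂) := by
        push_cast
        rfl
      rw [h3]
      refine Finset.sum_congr rfl fun j _ => ?_
      congr 1
    have hdecomp : ∑ i, t (x i) (y i) = ∑ j, t (b j) (q j) := by
      have h1 : ∀ i, t (x i) (y i) = ∑ j, ⟪q j, y i⟫ • t (x i) (q j) := by
        intro i
        conv_lhs => rw [hrepr i]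
        rw [map_sum]
        exact Finset.sum_congr rfl fun j _ => by rw [map_smul]
      have h2 : ∀ j, t (b j) (q j) = ∑ i, ⟪q j, y i⟫ • t (x i) (q j) := by
        intro j
        rw [hb]
        simp only [map_sum, map_smul, LinearMap.sum_apply, LinearMap.smul_apply]
      calc ∑ i, t (x i) (y i) = ∑ i, ∑ j, ⟪q j, y i⟫ • t (x i) (q j) :=
            Finset.sum_congr rfl fun i _ => h1 i
        _ = ∑ j, ∑ i, ⟪q j, y i⟫ • t (x i) (q j) := Finset.sum_comm
        _ = ∑ j, t (b j) (q j) := (Finset.sum_congr rfl fun j _ => (h2 j)).symm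
    rw [hdecomp]
    exact ey_lower t ht σ hσ0 hσm e f he hf u hu r m hm q hq b
end

section
/- Let v ∈ ℓ²(S × F) for countable index sets S, F, viewed as a Hilbert–Schmidt operator from ℓ²(F) to ℓ²(S) with singular values σ₁(v) ≥ σ₂(v) ≥ …. Define the contractions π_λ(v) = (Σ_{ν∈F} |v_{λν}|²)^{1/2} for λ ∈ S, and let (π*_k)_{k≥1} be the nonincreasing rearrangement of (π_λ(v))_{λ∈S}. Then for every r ∈ ℕ₀ one has Σ_{k>r} σ_k(v)² ≤ Σ_{k>r} (π*_k)². -/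
open scoped InnerProductSpace

private lemma stmt7_key (q b : ℕ → ℝ) (hq0 : ∀ k, 0 ≤ q k) (hqm : Antitone q) (hqs : Summable q)
    (hb0 : ∀ k, 0 ≤ b k) (hb1 : ∀ k, b k ≤ 1) (hbs : Summable b) (r : ℕ)
    (hbr : ∑' k, b k ≤ r) :
    ∑' k, q k * b k ≤ ∑ k ∈ Finset.range r, q k := by
  have hqb : Summable fun k => q k * b k :=
    Summable.of_nonneg_of_le (fun k => mul_nonneg (hq0 k) (hb0 k))
      (fun k => by nlinarith [hq0 k, hb0 k, hb1 k]) hqs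
  have h1 := Summable.sum_add_tsum_nat_add r hqb
  have hbtail : Summable fun k => b (k + r) := (summable_nat_add_iff r).2 hbs
  have h2 : ∑' k, q (k + r) * b (k + r) ≤ q r * ∑' k, b (k + r) := by
    rw [← tsum_mul_left]
    refine Summable.tsum_le_tsum (fun k => ?_) ((summable_nat_add_iff r).2 hqb) (hbtail.mul_left _)
    exact mul_le_mul_of_nonneg_right (hqm (Nat.le_add_left r k)) (hb0 _)
  have h3 := Summable.sum_add_tsum_nat_add r hbs
  have h4 : ∑' k, b (k + r) ≤ r - ∑ k ∈ Finset.range r, b k := by linarith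
  have h5 : q r * ∑' k, b (k + r) ≤ ∑ k ∈ Finset.range r, q r * (1 - b k) := by
    calc q r * ∑' k, b (k + r) ≤ q r * (r - ∑ k ∈ Finset.range r, b k) :=
          mul_le_mul_of_nonneg_left h4 (hq0 r)
      _ = ∑ k ∈ Finset.range r, q r * (1 - b k) := by
          simp only [mul_sub, mul_one, Finset.sum_sub_distrib, Finset.sum_const,
            Finset.card_range, nsmul_eq_mul, ← Finset.mul_sum]
          ring
  have h6 : ∑ k ∈ Finset.range r, (q k * b k + q r * (1 - b k)) ≤ ∑ k ∈ Finset.range r, q k := by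
    refine Finset.sum_le_sum fun k hk => ?_
    have hkr : q r ≤ q k := hqm (le_of_lt (Finset.mem_range.mp hk))
    nlinarith [hb0 k, hb1 k, hq0 k]
  calc ∑' k, q k * b k
      = ∑ k ∈ Finset.range r, q k * b k + ∑' k, q (k + r) * b (k + r) := h1.symm
    _ ≤ ∑ k ∈ Finset.range r, q k * b k + ∑ k ∈ Finset.range r, q r * (1 - b k) := by
        linarith [le_trans h2 h5]
    _ = ∑ k ∈ Finset.range r, (q k * b k + q r * (1 - b k)) := by rw [Finset.sum_add_distrib]
    _ ≤ _ := h6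

private lemma stmt7_row {S F : Type*} (v : lp (fun _ : S × F => ℝ) 2)
    (σ : ℕ → ℝ) (hσ0 : ∀ k, 0 ≤ σ k) (hσm : Antitone σ)
    (U : ℕ → lp (fun _ : S => ℝ) 2) (W : ℕ → lp (fun _ : F => ℝ) 2)
    (hU : Orthonormal ℝ U) (hW : Orthonormal ℝ W)
    (hsvd : ∀ (l : S) (n : F), HasSum (fun k => σ k * U k l * W k n) (v (l, n)))
    (l : S) :
    HasSum (fun k => σ k ^ 2 * (U k l) ^ 2) (∑' n : F, (v (l, n)) ^ 2) := by
  classical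
  set c : ℕ → ℝ := fun k => σ k * U k l with hc
  have hUl : ∀ k, ⟪U k, lp.single 2 l (1:ℝ)⟫_ℝ = U k l := by
    intro k
    rw [real_inner_comm, lp.inner_single_left]
    simp [RCLike.inner_apply]
  have hbessel : Summable fun k => (U k l) ^ 2 := by
    have := hU.inner_products_summable (x := lp.single 2 l (1:ℝ))
    simpa [hUl, Real.norm_eq_abs, sq_abs] using this
  have hc2 : Summable fun k => c k ^ 2 := by
    refine Summable.of_nonneg_of_le (fun k => sq_nonneg _) (fun k => ?_)
      (hbessel.mul_left (σ 0 ^ 2))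
    have h1 : σ k ^ 2 ≤ σ 0 ^ 2 := pow_le_pow_left₀ (hσ0 k) (hσm (Nat.zero_le k)) 2
    calc c k ^ 2 = σ k ^ 2 * (U k l) ^ 2 := by rw [hc]; ring
      _ ≤ σ 0 ^ 2 * (U k l) ^ 2 := mul_le_mul_of_nonneg_right h1 (sq_nonneg _)
  have hsummM : Summable fun k => c k • W k := by
    refine (hW.orthogonalFamily.summable_iff_norm_sq_summable c).2 ?_
    simpa [Real.norm_eq_abs, sq_abs] using hc2
  obtain ⟨w, hw⟩ := hsummM
  have hveq : ∀ n : F, v (l, n) = w n := by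
    intro n
    have h1 := hw.mapL (innerSL ℝ (lp.single 2 n (1:ℝ)))
    have h2 : ∀ x : lp (fun _ : F => ℝ) 2, ⟪lp.single 2 n (1:ℝ), x⟫_ℝ = x n := by
      intro x; rw [lp.inner_single_left]; simp [RCLike.inner_apply]
    simp only [innerSL_apply_apply, h2] at h1
    refine (hsvd l n).unique ?_
    have h3 : (fun k => σ k * U k l * W k n) = fun k => (c k • W k) n := by
      funext k; simp [hc, mul_assoc]
    rw [h3]
    exact h1
  have hWk : ∀ k, ⟪W k, w⟫_ℝ = c k := by
    intro k
    have h1 := hw.mapL (innerSL ℝ (W k))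
    simp only [innerSL_apply_apply, inner_smul_right] at h1
    refine h1.unique ?_
    have h2 : (fun j => c j * ⟪W k, W j⟫_ℝ) = fun j => if j = k then c k else 0 := by
      funext j
      rw [orthonormal_iff_ite.mp hW]
      by_cases h : k = j
      · subst h; simp
      · simp [h, Ne.symm h]
    rw [h2]
    exact hasSum_ite_eq k (c k)
  have hww := hw.mapL (innerSL ℝ w)
  simp only [innerSL_apply_apply, inner_smul_right] at hww
  have h4 : (fun k => c k * ⟪w, W k⟫_ℝ) = fun k => σ k ^ 2 * (U k l) ^ 2 := by
    funext k
    rw [real_inner_comm, hWk k, hc]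
    ring
  rw [h4] at hww
  have h5 : ∑' n : F, (v (l, n)) ^ 2 = ⟪w, w⟫_ℝ := by
    rw [lp.inner_eq_tsum]
    congr 1
    funext n
    rw [hveq n]
    simp [RCLike.inner_apply, sq]
  rw [h5]
  exact hww

/-- The tails of the singular values of `v ∈ ℓ²(S×F)` are dominated by the tails
of the nonincreasing rearrangement of the contractions
`π_λ(v) = (∑_ν |v_{λν}|²)^{1/2}`: `∑_{k>r} σ_k² ≤ ∑_{k>r} (π*_k)²`. -/
theorem stmt7 {S F : Type*}
    (v : lp (fun _ : S × F => ℝ) 2)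
    (σ : ℕ → ℝ) (hσ0 : ∀ k, 0 ≤ σ k) (hσm : Antitone σ)
    (hσsum : Summable fun k => σ k ^ 2)
    (U : ℕ → lp (fun _ : S => ℝ) 2) (W : ℕ → lp (fun _ : F => ℝ) 2)
    (hU : Orthonormal ℝ U) (hW : Orthonormal ℝ W)
    (hsvd : ∀ (l : S) (n : F), HasSum (fun k => σ k * U k l * W k n) (v (l, n)))
    (hnorm : ‖v‖ ^ 2 = ∑' k, σ k ^ 2)
    (e : ℕ ≃ S)
    (hmono : Antitone fun k => ∑' n : F, (v (e k, n)) ^ 2)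
    (r : ℕ) :
    ∑' k : ℕ, σ (r + k) ^ 2 ≤ ∑' k : ℕ, ∑' n : F, (v (e (r + k), n)) ^ 2 := by
  classical
  set q : ℕ → ℝ := fun k => σ k ^ 2 with hq
  set p : ℕ → ℝ := fun j => ∑' n : F, (v (e j, n)) ^ 2 with hp
  have hq0 : ∀ k, 0 ≤ q k := fun k => sq_nonneg _
  have hqm : Antitone q := fun i j hij => pow_le_pow_left₀ (hσ0 j) (hσm hij) 2
  -- the row identity
  have hrow : ∀ l : S, HasSum (fun k => σ k ^ 2 * (U k l) ^ 2) (∑' n : F, (v (l, n)) ^ 2) :=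
    stmt7_row v σ hσ0 hσm U W hU hW hsvd
  -- contractions p as `tsum`
  have hrow' : ∀ j : ℕ, p j = ∑' k, q k * (U k (e j)) ^ 2 := fun j => ((hrow (e j)).tsum_eq).symm
  -- Bessel : for each l, Summable and tsum ≤ 1
  have hsingle_norm : ∀ l : S, ‖(lp.single 2 l (1:ℝ) : lp (fun _ : S => ℝ) 2)‖ ^ 2 = 1 := by
    intro l
    rw [← real_inner_self_eq_norm_sq, lp.inner_single_left]
    simp [RCLike.inner_apply, lp.single_apply]
  have hUl : ∀ (k : ℕ) (l : S), ⟪U k, lp.single 2 l (1:ℝ)⟫_ℝ = U k l := by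
    intro k l
    rw [real_inner_comm, lp.inner_single_left]
    simp [RCLike.inner_apply]
  have hbes_sum : ∀ l : S, Summable fun k => (U k l) ^ 2 := by
    intro l
    have := hU.inner_products_summable (x := lp.single 2 l (1:ℝ))
    simpa [hUl, Real.norm_eq_abs, sq_abs] using this
  have hbes_le : ∀ l : S, ∑' k, (U k l) ^ 2 ≤ 1 := by
    intro l
    have := hU.tsum_inner_products_le (x := lp.single 2 l (1:ℝ))
    rw [hsingle_norm l] at this
    simpa [hUl, Real.norm_eq_abs, sq_abs] using this
  -- each U k has unit ℓ² mass
  have hUnorm : ∀ k : ℕ, HasSum (fun j : ℕ => (U k (e j)) ^ 2) 1 := by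
    intro k
    have h1 := lp.hasSum_inner (𝕜 := ℝ) (U k) (U k)
    have h2 : ⟪U k, U k⟫_ℝ = 1 := by
      rw [real_inner_self_eq_norm_sq, hU.1 k]; norm_num
    rw [h2] at h1
    have h3 : (fun l : S => ⟪U k l, U k l⟫_ℝ) = fun l : S => (U k l) ^ 2 := by
      funext l; simp [RCLike.inner_apply, sq]
    rw [h3] at h1
    exact (Equiv.hasSum_iff e).2 h1
  -- summability of v² over the product, and total mass
  have hvv := lp.hasSum_inner (𝕜 := ℝ) v v
  have hvsq : HasSum (fun pp : S × F => (v pp) ^ 2) (‖v‖ ^ 2) := by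
    rw [← real_inner_self_eq_norm_sq]
    have h3 : (fun pp : S × F => ⟪v pp, v pp⟫_ℝ) = fun pp : S × F => (v pp) ^ 2 := by
      funext pp; simp [RCLike.inner_apply, sq]
    rw [h3] at hvv
    exact hvv
  have hfib : ∀ l : S, Summable fun n : F => (v (l, n)) ^ 2 :=
    fun l => hvsq.summable.prod_factor l
  have htotal : ∑' j, p j = ∑' k, q k := by
    have h1 : ∑' pp : S × F, (v pp) ^ 2 = ∑' (l : S) (n : F), (v (l, n)) ^ 2 :=
      Summable.tsum_prod' hvsq.summable hfib
    have h2 : ∑' j, p j = ∑' l : S, ∑' n : F, (v (l, n)) ^ 2 :=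
      e.tsum_eq (fun l => ∑' n : F, (v (l, n)) ^ 2)
    rw [h2, ← h1, hvsq.tsum_eq, hnorm]
  -- summability of p
  have hpS : Summable fun l : S => ∑' n : F, (v (l, n)) ^ 2 := by
    refine ((summable_prod_of_nonneg ?_).mp hvsq.summable).2
    exact fun pp => sq_nonneg _
  have hps : Summable p := by
    have := hpS.comp_injective e.injective
    simpa [hp, Function.comp_def] using this
  -- the weights b
  set b : ℕ → ℝ := fun k => ∑ j ∈ Finset.range r, (U k (e j)) ^ 2 with hb
  have hqa_summ : ∀ j : ℕ, Summable fun k => q k * (U k (e j)) ^ 2 := by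
    intro j
    refine Summable.of_nonneg_of_le (fun k => mul_nonneg (hq0 k) (sq_nonneg _)) (fun k => ?_)
      ((hbes_sum (e j)).mul_left (q 0))
    exact mul_le_mul_of_nonneg_right (hqm (Nat.zero_le k)) (sq_nonneg _)
  have hswap : ∑ j ∈ Finset.range r, p j = ∑' k, q k * b k := by
    have h1 : ∑ j ∈ Finset.range r, p j
        = ∑ j ∈ Finset.range r, ∑' k, q k * (U k (e j)) ^ 2 :=
      Finset.sum_congr rfl fun j _ => hrow' j
    rw [h1, ← Summable.tsum_finsetSum (fun j _ => hqa_summ j)]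
    congr 1
    funext k
    rw [hb, Finset.mul_sum]
  have hb0 : ∀ k, 0 ≤ b k := fun k => Finset.sum_nonneg fun j _ => sq_nonneg _
  have hb1 : ∀ k, b k ≤ 1 := by
    intro k
    calc b k ≤ ∑' j : ℕ, (U k (e j)) ^ 2 :=
          Summable.sum_le_tsum (Finset.range r) (fun j _ => sq_nonneg _) (hUnorm k).summable
      _ = 1 := (hUnorm k).tsum_eq
  have hbs : Summable b :=
    summable_sum fun j _ => ((hbes_sum (e j)).comp_injective (Function.injective_id)).congr
      (fun k => rfl)
  have hbr : ∑' k, b k ≤ r := by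
    have h1 : ∑' k, b k = ∑ j ∈ Finset.range r, ∑' k, (U k (e j)) ^ 2 :=
      Summable.tsum_finsetSum fun j _ => hbes_sum (e j)
    rw [h1]
    calc ∑ j ∈ Finset.range r, ∑' k, (U k (e j)) ^ 2 ≤ ∑ j ∈ Finset.range r, (1:ℝ) :=
          Finset.sum_le_sum fun j _ => hbes_le (e j)
      _ = r := by simp
  have hkey : ∑ j ∈ Finset.range r, p j ≤ ∑ k ∈ Finset.range r, q k := by
    rw [hswap]
    exact stmt7_key q b hq0 hqm hσsum hb0 hb1 hbs r hbr
  -- final assembly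
  have hqtail := Summable.sum_add_tsum_nat_add r hσsum
  have hptail := Summable.sum_add_tsum_nat_add r hps
  have hgoal1 : ∑' k : ℕ, σ (r + k) ^ 2 = ∑' k, q (k + r) := by
    congr 1; funext k; rw [hq]; ring_nf
  have hgoal2 : (∑' k : ℕ, ∑' n : F, (v (e (r + k), n)) ^ 2) = ∑' k, p (k + r) := by
    congr 1; funext k; rw [hp]; ring_nf; rw [Nat.add_comm r k]
  rw [hgoal1, hgoal2]
  have h := htotal
  linarith [hqtail, hptail, hkey, htotal]
end

section
/- (Coarsening stability in approximation classes) Let s > 0 and let u ∈ ℓ²(J) over a countable index set J belong to the approximation class A^s, i.e. ‖u‖_{A^s} := sup_{N≥0} (N+1)^s inf_{#Λ≤N} ‖u − R_Λ u‖ < ∞. Suppose w ∈ ℓ²(J) satisfies ‖u − w‖ ≤ η and #supp(w) ≤ C₀ (‖u‖_{A^s}/η)^{1/s} for some constant C₀ ≥ 1 and η > 0. Then w ∈ A^s with ‖w‖_{A^s} ≤ C ‖u‖_{A^s}, where C depends only on s and C₀. -/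
open scoped Classical

/-- Error of approximating `f` by its restriction to a finite index set `Λ`. -/
noncomputable def tailErr {J : Type*} (f : J → ℝ) (Λ : Finset J) : ℝ :=
  Real.sqrt (∑' j, if j ∈ Λ then 0 else f j ^ 2)

/-- Best `N`-term approximation error of `f` in `ℓ²(J)`. -/
noncomputable def bestErr {J : Type*} (f : J → ℝ) (N : ℕ) : ℝ :=
  ⨅ Λ : {Λ : Finset J // Λ.card ≤ N}, tailErr f (Λ : Finset J)

/-- The `A^s` quasi-norm `sup_N (N+1)^s · (best N-term error)`. -/
noncomputable def asNorm {J : Type*} (s : ℝ) (f : J → ℝ) : ℝ :=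
  ⨆ N : ℕ, ((N : ℝ) + 1) ^ s * bestErr f N

lemma sqrt_add_le' {x y : ℝ} (hx : 0 ≤ x) (hy : 0 ≤ y) :
    Real.sqrt (x + y) ≤ Real.sqrt x + Real.sqrt y := by
  have h1 := Real.sq_sqrt hx
  have h2 := Real.sq_sqrt hy
  have h3 := Real.sqrt_nonneg x
  have h4 := Real.sqrt_nonneg y
  have : x + y ≤ (Real.sqrt x + Real.sqrt y) ^ 2 := by nlinarith
  calc Real.sqrt (x + y) ≤ Real.sqrt ((Real.sqrt x + Real.sqrt y) ^ 2) :=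
        Real.sqrt_le_sqrt this
    _ = Real.sqrt x + Real.sqrt y := Real.sqrt_sq (by positivity)

lemma tailErr_nonneg {J : Type*} (f : J → ℝ) (Λ : Finset J) : 0 ≤ tailErr f Λ :=
  Real.sqrt_nonneg _

lemma bestErr_nonneg {J : Type*} (f : J → ℝ) (N : ℕ) : 0 ≤ bestErr f N :=
  Real.iInf_nonneg fun _ => tailErr_nonneg _ _

lemma bestErr_bddBelow {J : Type*} (f : J → ℝ) (N : ℕ) :
    BddBelow (Set.range fun Λ : {Λ : Finset J // Λ.card ≤ N} =>
      tailErr f (Λ : Finset J)) :=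
  ⟨0, by rintro x ⟨Λ, rfl⟩; exact tailErr_nonneg _ _⟩

set_option maxHeartbeats 2000000 in
/-- Coarsening stability: if `‖u - w‖ ≤ η` and `#supp w ≤ C₀ (‖u‖_{A^s}/η)^{1/s}`,
then `‖w‖_{A^s} ≤ C ‖u‖_{A^s}` with `C` depending only on `s` and `C₀`. -/
theorem stmt12 (s : ℝ) (hs : 0 < s) (C₀ : ℝ) (hC₀ : 1 ≤ C₀) :
    ∃ C : ℝ, 0 < C ∧
      ∀ (J : Type) (_ : Countable J) (u w : J → ℝ) (η : ℝ), 0 < η →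
        Summable (fun j => u j ^ 2) →
        BddAbove (Set.range fun N : ℕ => ((N : ℝ) + 1) ^ s * bestErr u N) →
        Real.sqrt (∑' j, (u j - w j) ^ 2) ≤ η →
        (∃ Λ : Finset J, (∀ j ∉ Λ, w j = 0) ∧
            (Λ.card : ℝ) ≤ C₀ * (asNorm s u / η) ^ (1 / s)) →
        ∀ N : ℕ, ((N : ℝ) + 1) ^ s * bestErr w N ≤ C * asNorm s u := by
  have hC₀pos : (0:ℝ) < C₀ := lt_of_lt_of_le one_pos hC₀
  have hC₀s : (0:ℝ) < C₀ ^ s := Real.rpow_pos_of_pos hC₀pos s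
  have hsqrt2 : (0:ℝ) < Real.sqrt 2 := Real.sqrt_pos.mpr (by norm_num)
  refine ⟨Real.sqrt 2 * (1 + C₀ ^ s), by positivity, ?_⟩
  intro J _ u w η hη hu hbdd hdist ⟨Λ, hΛ0, hΛcard⟩ N
  haveI : ∀ n : ℕ, Nonempty {Λ : Finset J // Λ.card ≤ n} := fun n => ⟨⟨∅, by simp⟩⟩
  set M := asNorm s u with hM
  have hM0 : 0 ≤ M := Real.iSup_nonneg fun N =>
    mul_nonneg (Real.rpow_nonneg (by positivity) s) (bestErr_nonneg _ _)
  have hbest_u : ∀ N : ℕ, ((N : ℝ) + 1) ^ s * bestErr u N ≤ M := fun N =>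
    le_ciSup hbdd N
  -- summability facts
  have hwsq : Summable (fun j => w j ^ 2) :=
    summable_of_ne_finset_zero (s := Λ) (fun j hj => by rw [hΛ0 j hj]; ring)
  have huw : Summable (fun j => (u j - w j) ^ 2) := by
    have hsum : Summable (fun j => 2 * u j ^ 2 + 2 * w j ^ 2) :=
      (hu.mul_left 2).add (hwsq.mul_left 2)
    exact hsum.of_nonneg_of_le (fun j => sq_nonneg _)
      (fun j => by nlinarith [sq_nonneg (u j + w j)])
  by_cases hN : Λ.card ≤ N
  · -- w is supported on Λ, Λ.card ≤ N, so bestErr w N = 0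
    have h1 : bestErr w N ≤ tailErr w Λ :=
      ciInf_le (bestErr_bddBelow w N) ⟨Λ, hN⟩
    have h2 : tailErr w Λ = 0 := by
      have : ∀ j, (if j ∈ Λ then 0 else w j ^ 2) = 0 := by
        intro j
        by_cases hj : j ∈ Λ
        · simp [hj]
        · simp [hj, hΛ0 j hj]
      simp [tailErr, this]
    have h3 : bestErr w N ≤ 0 := h2 ▸ h1
    have h4 : bestErr w N = 0 := le_antisymm h3 (bestErr_nonneg _ _)
    rw [h4, mul_zero]
    positivity
  · -- N < Λ.card
    push_neg at hN
    have hNcard : ((N : ℝ) + 1) ≤ C₀ * (M / η) ^ (1 / s) := by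
      have : ((N : ℝ) + 1) ≤ (Λ.card : ℝ) := by exact_mod_cast hN
      linarith
    -- triangle inequality: for any Λ' with card ≤ N
    have hkey : ∀ Λ' : {Λ : Finset J // Λ.card ≤ N},
        tailErr w (Λ' : Finset J) ≤
          Real.sqrt 2 * tailErr u (Λ' : Finset J) + Real.sqrt 2 * η := by
      rintro ⟨Λ', -⟩
      simp only
      have hA : Summable (fun j => if j ∈ Λ' then 0 else u j ^ 2) := by
        refine Summable.of_nonneg_of_le (fun j => ?_) (fun j => ?_) hu <;>
          [skip; skip] <;> (by_cases hj : j ∈ Λ' <;> simp [hj, sq_nonneg])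
      have hB : Summable (fun j => if j ∈ Λ' then 0 else (u j - w j) ^ 2) := by
        refine Summable.of_nonneg_of_le (fun j => ?_) (fun j => ?_) huw <;>
          [skip; skip] <;> (by_cases hj : j ∈ Λ' <;> simp [hj, sq_nonneg])
      have hcle : ∀ j, (if j ∈ Λ' then 0 else w j ^ 2) ≤
          2 * (if j ∈ Λ' then 0 else u j ^ 2)
            + 2 * (if j ∈ Λ' then 0 else (u j - w j) ^ 2) := by
        intro j
        by_cases hj : j ∈ Λ'
        · simp [hj]
        · simp only [if_neg hj]
          nlinarith [sq_nonneg (2 * u j - w j)]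
      have hsum2 : Summable (fun j => 2 * (if j ∈ Λ' then 0 else u j ^ 2)
          + 2 * (if j ∈ Λ' then 0 else (u j - w j) ^ 2)) :=
        (hA.mul_left 2).add (hB.mul_left 2)
      have hC : Summable (fun j => if j ∈ Λ' then 0 else w j ^ 2) := by
        refine Summable.of_nonneg_of_le (fun j => ?_) hcle hsum2
        by_cases hj : j ∈ Λ' <;> simp [hj, sq_nonneg]
      have hA0 : 0 ≤ ∑' j, (if j ∈ Λ' then 0 else u j ^ 2) :=
        tsum_nonneg fun j => by by_cases hj : j ∈ Λ' <;> simp [hj, sq_nonneg]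
      have hB0 : 0 ≤ ∑' j, (if j ∈ Λ' then 0 else (u j - w j) ^ 2) :=
        tsum_nonneg fun j => by by_cases hj : j ∈ Λ' <;> simp [hj, sq_nonneg]
      have h1 : (∑' j, (if j ∈ Λ' then 0 else w j ^ 2)) ≤
          2 * (∑' j, (if j ∈ Λ' then 0 else u j ^ 2))
            + 2 * (∑' j, (if j ∈ Λ' then 0 else (u j - w j) ^ 2)) := by
        calc (∑' j, (if j ∈ Λ' then 0 else w j ^ 2))
            ≤ ∑' j, (2 * (if j ∈ Λ' then 0 else u j ^ 2)
                + 2 * (if j ∈ Λ' then 0 else (u j - w j) ^ 2)) :=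
              Summable.tsum_le_tsum hcle hC hsum2
          _ = 2 * (∑' j, (if j ∈ Λ' then 0 else u j ^ 2))
                + 2 * (∑' j, (if j ∈ Λ' then 0 else (u j - w j) ^ 2)) := by
              rw [Summable.tsum_add (hA.mul_left 2) (hB.mul_left 2), tsum_mul_left, tsum_mul_left]
      have h3 : Real.sqrt (∑' j, (if j ∈ Λ' then 0 else (u j - w j) ^ 2)) ≤ η := by
        refine le_trans (Real.sqrt_le_sqrt (Summable.tsum_le_tsum ?_ hB huw)) hdist
        intro j; by_cases hj : j ∈ Λ' <;> simp [hj, sq_nonneg]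
      have h2 : Real.sqrt (∑' j, (if j ∈ Λ' then 0 else w j ^ 2)) ≤
          Real.sqrt 2 * Real.sqrt (∑' j, (if j ∈ Λ' then 0 else u j ^ 2))
            + Real.sqrt 2 * Real.sqrt (∑' j, (if j ∈ Λ' then 0 else (u j - w j) ^ 2)) := by
        calc Real.sqrt (∑' j, (if j ∈ Λ' then 0 else w j ^ 2))
            ≤ Real.sqrt (2 * (∑' j, (if j ∈ Λ' then 0 else u j ^ 2))
                + 2 * (∑' j, (if j ∈ Λ' then 0 else (u j - w j) ^ 2))) :=
              Real.sqrt_le_sqrt h1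
          _ ≤ Real.sqrt (2 * (∑' j, (if j ∈ Λ' then 0 else u j ^ 2)))
                + Real.sqrt (2 * (∑' j, (if j ∈ Λ' then 0 else (u j - w j) ^ 2))) :=
              sqrt_add_le' (by positivity) (by positivity)
          _ = _ := by rw [Real.sqrt_mul (by norm_num), Real.sqrt_mul (by norm_num)]
      refine le_trans h2 ?_
      have h4 := mul_le_mul_of_nonneg_left h3 hsqrt2.le
      have h5 : tailErr u Λ' = Real.sqrt (∑' j, (if j ∈ Λ' then 0 else u j ^ 2)) := rfl
      rw [h5]
      linarith
    -- infer bestErr w N ≤ √2 * bestErr u N + √2 * η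
    have hbw : bestErr w N ≤ Real.sqrt 2 * bestErr u N + Real.sqrt 2 * η := by
      have hle : ∀ Λ' : {Λ : Finset J // Λ.card ≤ N},
          (bestErr w N - Real.sqrt 2 * η) / Real.sqrt 2 ≤ tailErr u (Λ' : Finset J) := by
        intro Λ'
        have h1 : bestErr w N ≤ tailErr w (Λ' : Finset J) :=
          ciInf_le (bestErr_bddBelow w N) Λ'
        have h2 := (hkey Λ')
        rw [div_le_iff₀ hsqrt2]
        nlinarith [tailErr_nonneg u (Λ' : Finset J)]
      have := le_ciInf hle
      have h4 : (bestErr w N - Real.sqrt 2 * η) / Real.sqrt 2 ≤ bestErr u N := this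
      rw [div_le_iff₀ hsqrt2] at h4
      nlinarith [bestErr_nonneg u N]
    -- combine
    have hNs : ((N : ℝ) + 1) ^ s ≤ C₀ ^ s * (M / η) := by
      have h1 : ((N : ℝ) + 1) ^ s ≤ (C₀ * (M / η) ^ (1 / s)) ^ s :=
        Real.rpow_le_rpow (by positivity) hNcard hs.le
      have h2 : (C₀ * (M / η) ^ (1 / s)) ^ s = C₀ ^ s * ((M / η) ^ (1 / s)) ^ s :=
        Real.mul_rpow hC₀pos.le (Real.rpow_nonneg (by positivity) _)
      have h3 : ((M / η) ^ (1 / s)) ^ s = M / η := by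
        rw [← Real.rpow_mul (show (0:ℝ) ≤ M / η by positivity),
          one_div_mul_cancel hs.ne', Real.rpow_one]
      rw [h2, h3] at h1
      exact h1
    have hpow0 : (0:ℝ) ≤ ((N : ℝ) + 1) ^ s := Real.rpow_nonneg (by positivity) s
    have hcomb : C₀ ^ s * (M / η) * η = C₀ ^ s * M := by
      field_simp
    calc ((N : ℝ) + 1) ^ s * bestErr w N
        ≤ ((N : ℝ) + 1) ^ s * (Real.sqrt 2 * bestErr u N + Real.sqrt 2 * η) :=
          mul_le_mul_of_nonneg_left hbw hpow0
      _ = Real.sqrt 2 * (((N : ℝ) + 1) ^ s * bestErr u N)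
            + Real.sqrt 2 * (((N : ℝ) + 1) ^ s * η) := by ring
      _ ≤ Real.sqrt 2 * M + Real.sqrt 2 * (C₀ ^ s * (M / η) * η) := by
          have t1 := mul_le_mul_of_nonneg_left (hbest_u N) hsqrt2.le
          have t2 : ((N : ℝ) + 1) ^ s * η ≤ C₀ ^ s * (M / η) * η :=
            mul_le_mul_of_nonneg_right hNs hη.le
          have t3 := mul_le_mul_of_nonneg_left t2 hsqrt2.le
          linarith
      _ = Real.sqrt 2 * (1 + C₀ ^ s) * M := by rw [hcomb]; ring
end
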